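/- Let k be a field, let V₀, V₁, V₂, V₃ be finite-dimensional k-vector spaces, let h : V₁ → V₀ be a bijective k-linear map, let f : V₂ → V₁ and g : V₃ → V₁ be injective k-linear maps with f(V₂) ∩ g(V₃) = {0}, and let e₀, e₁, e₂, e₃ be natural numbers with e₂ + e₃ ≤ e₁ ≤ e₀. Then there is a bijection between: (1) the set of quadruples (U₀, U₁, U₂, U₃) of subspaces Uᵢ ≤ Vᵢ with dim Uᵢ = eᵢ for i = 0,…,3, f(U₂) ⊆ U₁, g(U₃) ⊆ U₁ and h(U₁) ⊆ U₀; and (2) the product of the set of triples (U₀, U₂, U₃) of subspaces with dim U₀ = e₀, dim U₂ = e₂, dim U₃ = e₃, h(f(U₂)) ⊆ U₀ and h(g(U₃)) ⊆ U₀, with the set of (e₁ − e₂ − e₃)-dimensional subspaces of k^{e₀ − e₂ − e₃}. -/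

import Mathlib

/-!
A compatible quadruple is a compatible triple `(U₀, U₂, U₃)` for `h ∘ f`, `h ∘ g` together with
a subspace `U₁` of dimension `e₁` squeezed between `S = f U₂ ⊔ g U₃` and `T = h⁻¹ U₀`. As `f`, `g`
are injective with independent images, `dim S = e₂ + e₃`; as `h` is bijective, `dim T = e₀`.
By the correspondence theorem these `U₁` are the `(e₁ - e₂ - e₃)`-dimensional subspaces of
`T / S ≅ k^(e₀ - e₂ - e₃)`, a Grassmannian that no longer depends on the triple.
-/

open Module Submodule

/-- Dimension, not codimension as in `Module.Grassmannian`, is prescribed. -/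
abbrev SubmodulesOfFinrank (k M : Type*) [Field k] [AddCommGroup M] [Module k M] (d : ℕ) :=
  {W : Submodule k M // finrank k W = d}

def LinearEquiv.submodulesOfFinrankCongr {k M N : Type*} [Field k] [AddCommGroup M] [Module k M]
    [AddCommGroup N] [Module k N] (e : M ≃ₗ[k] N) (d : ℕ) :
    SubmodulesOfFinrank k M d ≃ SubmodulesOfFinrank k N d :=
  (orderIsoMapComap e).toEquiv.subtypeEquiv fun W => by
    rw [RelIso.coe_fn_toEquiv, orderIsoMapComap_apply, LinearEquiv.finrank_map_eq]

namespace Submodule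

section Correspondence

variable {R M : Type*}

def iicSubtypeEquiv [Semiring R] [AddCommMonoid M] [Module R M] (T : Submodule R M)
    (P : Submodule R M → Prop) :
    {U : Submodule R M // U ≤ T ∧ P U} ≃ {W : Submodule R T // P (W.map T.subtype)} where
  toFun U := ⟨U.1.comap T.subtype, by rw [map_comap_subtype, inf_eq_right.2 U.2.1]; exact U.2.2⟩
  invFun W := ⟨W.1.map T.subtype, map_subtype_le _ _, W.2⟩
  left_inv U := Subtype.ext <| by simp only [map_comap_subtype, inf_eq_right.2 U.2.1]
  right_inv W := Subtype.ext <| comap_map_eq_of_injective T.injective_subtype _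

def iciSubtypeEquiv [Ring R] [AddCommGroup M] [Module R M] (p : Submodule R M)
    (P : Submodule R M → Prop) :
    {U : Submodule R M // p ≤ U ∧ P U} ≃ {W : Submodule R (M ⧸ p) // P (W.comap p.mkQ)} where
  toFun U := ⟨U.1.map p.mkQ, by rw [comap_map_mkQ, sup_eq_right.2 U.2.1]; exact U.2.2⟩
  invFun W := ⟨W.1.comap p.mkQ, le_comap_mkQ p _, W.2⟩
  left_inv U := Subtype.ext <| by simp only [comap_map_mkQ, sup_eq_right.2 U.2.1]
  right_inv W := Subtype.ext <| map_comap_eq_of_surjective p.mkQ_surjective _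

end Correspondence

variable {k M : Type*} [Field k] [AddCommGroup M] [Module k M]

theorem finrank_comap_mkQ [FiniteDimensional k M] (p : Submodule k M)
    (W : Submodule k (M ⧸ p)) :
    finrank k (W.comap p.mkQ) = finrank k p + finrank k W := by
  set U := W.comap p.mkQ
  have hrange : LinearMap.range (p.mkQ.domRestrict U) = W := by
    rw [LinearMap.range_domRestrict, map_comap_eq_of_surjective p.mkQ_surjective]
  have hker : LinearMap.ker (p.mkQ.domRestrict U) = p.comap U.subtype := by
    rw [LinearMap.ker_domRestrict, ker_mkQ]
  have := LinearMap.finrank_range_add_finrank_ker (p.mkQ.domRestrict U)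
  rw [hrange, hker, (comapSubtypeEquivOfLe (le_comap_mkQ p W)).finrank_eq] at this
  omega

theorem le_map_subtype_iff {S T : Submodule k M} (hST : S ≤ T) (W : Submodule k T) :
    S ≤ W.map T.subtype ↔ S.comap T.subtype ≤ W := by
  constructor
  · intro hSW
    simpa only [comap_map_eq_of_injective T.injective_subtype] using comap_mono (f := T.subtype) hSW
  · intro hSW
    simpa only [map_comap_subtype, inf_eq_right.2 hST] using map_mono (f := T.subtype) hSW

def intervalFinrankEquiv [FiniteDimensional k M] {S T : Submodule k M} (hST : S ≤ T) (d : ℕ) :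
    {U : Submodule k M // U ≤ T ∧ S ≤ U ∧ finrank k U = finrank k S + d} ≃
      SubmodulesOfFinrank k (T ⧸ S.comap T.subtype) d :=
  have hS : finrank k (S.comap T.subtype) = finrank k S := (comapSubtypeEquivOfLe hST).finrank_eq
  (iicSubtypeEquiv T fun U => S ≤ U ∧ finrank k U = finrank k S + d).trans <|
    (Equiv.subtypeEquivRight fun W => by
      rw [le_map_subtype_iff hST, finrank_map_subtype_eq, hS]).trans <|
    (iciSubtypeEquiv (S.comap T.subtype)
      fun W => finrank k W = finrank k (S.comap T.subtype) + d).trans <|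
    Equiv.subtypeEquivRight fun W => by rw [finrank_comap_mkQ]; omega

end Submodule

theorem LinearMap.finrank_comap_of_bijective {k M N : Type*} [Field k] [AddCommGroup M]
    [Module k M] [AddCommGroup N] [Module k N] {h : M →ₗ[k] N} (hh : Function.Bijective h)
    (U : Submodule k N) : finrank k (U.comap h) = finrank k U :=
  (LinearEquiv.ofSubmodule' (LinearEquiv.ofBijective h hh) U).finrank_eq

section Representations

variable {k V₀ V₁ V₂ V₃ : Type*} [Field k]
  [AddCommGroup V₀] [Module k V₀] [AddCommGroup V₁] [Module k V₁]
  [AddCommGroup V₂] [Module k V₂] [AddCommGroup V₃] [Module k V₃]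

theorem finrank_map_sup_map_of_injective [FiniteDimensional k V₁] {f : V₂ →ₗ[k] V₁}
    {g : V₃ →ₗ[k] V₁} (hf : Function.Injective f) (hg : Function.Injective g)
    (hfg : LinearMap.range f ⊓ LinearMap.range g = ⊥) (U₂ : Submodule k V₂)
    (U₃ : Submodule k V₃) :
    finrank k ↥(U₂.map f ⊔ U₃.map g) = finrank k U₂ + finrank k U₃ := by
  have hinf : U₂.map f ⊓ U₃.map g = ⊥ :=
    le_bot_iff.1 <| hfg ▸ inf_le_inf LinearMap.map_le_range LinearMap.map_le_range
  have := finrank_sup_add_finrank_inf_eq (U₂.map f) (U₃.map g)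
  rwa [hinf, finrank_bot, add_zero, ← (equivMapOfInjective f hf U₂).finrank_eq,
    ← (equivMapOfInjective g hg U₃).finrank_eq] at this

abbrev CompatibleTriples (a : V₂ →ₗ[k] V₀) (b : V₃ →ₗ[k] V₀) (e₀ e₂ e₃ : ℕ) :=
  {U : Submodule k V₀ × Submodule k V₂ × Submodule k V₃ //
    finrank k ↥U.1 = e₀ ∧ finrank k ↥U.2.1 = e₂ ∧ finrank k ↥U.2.2 = e₃ ∧
    U.2.1.map a ≤ U.1 ∧ U.2.2.map b ≤ U.1}

abbrev CompatibleQuadruples (h : V₁ →ₗ[k] V₀) (f : V₂ →ₗ[k] V₁) (g : V₃ →ₗ[k] V₁)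
    (e₀ e₁ e₂ e₃ : ℕ) :=
  {U : Submodule k V₀ × Submodule k V₁ × Submodule k V₂ × Submodule k V₃ //
    finrank k ↥U.1 = e₀ ∧ finrank k ↥U.2.1 = e₁ ∧
    finrank k ↥U.2.2.1 = e₂ ∧ finrank k ↥U.2.2.2 = e₃ ∧
    U.2.2.1.map f ≤ U.2.1 ∧ U.2.2.2.map g ≤ U.2.1 ∧ U.2.1.map h ≤ U.1}

variable (h : V₁ →ₗ[k] V₀) (f : V₂ →ₗ[k] V₁) (g : V₃ →ₗ[k] V₁)

theorem CompatibleTriples.map_sup_map_le_comap {e₀ e₂ e₃ : ℕ}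
    (U : CompatibleTriples (h ∘ₗ f) (h ∘ₗ g) e₀ e₂ e₃) :
    U.1.2.1.map f ⊔ U.1.2.2.map g ≤ U.1.1.comap h := by
  obtain ⟨⟨U₀, U₂, U₃⟩, -, -, -, hfU, hgU⟩ := U
  rw [map_comp, map_le_iff_le_comap] at hfU hgU
  exact sup_le hfU hgU

def compatibleQuadruplesEquivSigma (e₀ e₁ e₂ e₃ : ℕ) :
    CompatibleQuadruples h f g e₀ e₁ e₂ e₃ ≃
      Σ U : CompatibleTriples (h ∘ₗ f) (h ∘ₗ g) e₀ e₂ e₃,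
        {U₁ : Submodule k V₁ //
          U₁ ≤ U.1.1.comap h ∧ U.1.2.1.map f ⊔ U.1.2.2.map g ≤ U₁ ∧ finrank k U₁ = e₁} where
  toFun U :=
    ⟨⟨(U.1.1, U.1.2.2.1, U.1.2.2.2), U.2.1, U.2.2.2.1, U.2.2.2.2.1,
        map_comp f h _ ▸ (map_mono U.2.2.2.2.2.1).trans U.2.2.2.2.2.2.2,
        map_comp g h _ ▸ (map_mono U.2.2.2.2.2.2.1).trans U.2.2.2.2.2.2.2⟩,
      U.1.2.1, map_le_iff_le_comap.1 U.2.2.2.2.2.2.2,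
      sup_le U.2.2.2.2.2.1 U.2.2.2.2.2.2.1, U.2.2.1⟩
  invFun U :=
    ⟨(U.1.1.1, U.2.1, U.1.1.2.1, U.1.1.2.2), U.1.2.1, U.2.2.2.2, U.1.2.2.1, U.1.2.2.2.1,
      le_sup_left.trans U.2.2.2.1, le_sup_right.trans U.2.2.2.1,
      map_le_iff_le_comap.2 U.2.2.1⟩
  left_inv _ := rfl
  right_inv _ := rfl

end Representations

theorem stmt2_general (k : Type*) [Field k]
    (V₀ V₁ V₂ V₃ : Type*)
    [AddCommGroup V₀] [Module k V₀]
    [AddCommGroup V₁] [Module k V₁] [FiniteDimensional k V₁]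
    [AddCommGroup V₂] [Module k V₂]
    [AddCommGroup V₃] [Module k V₃]
    (h : V₁ →ₗ[k] V₀) (f : V₂ →ₗ[k] V₁) (g : V₃ →ₗ[k] V₁)
    (hh : Function.Bijective h) (hf : Function.Injective f) (hg : Function.Injective g)
    (hfg : LinearMap.range f ⊓ LinearMap.range g = ⊥)
    (e₀ e₁ e₂ e₃ : ℕ) (h23 : e₂ + e₃ ≤ e₁) :
    Nonempty (
      {U : Submodule k V₀ × Submodule k V₁ × Submodule k V₂ × Submodule k V₃ //
          finrank k ↥U.1 = e₀ ∧ finrank k ↥U.2.1 = e₁ ∧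
          finrank k ↥U.2.2.1 = e₂ ∧ finrank k ↥U.2.2.2 = e₃ ∧
          U.2.2.1.map f ≤ U.2.1 ∧ U.2.2.2.map g ≤ U.2.1 ∧ U.2.1.map h ≤ U.1}
        ≃
      ({U : Submodule k V₀ × Submodule k V₂ × Submodule k V₃ //
          finrank k ↥U.1 = e₀ ∧ finrank k ↥U.2.1 = e₂ ∧ finrank k ↥U.2.2 = e₃ ∧
          U.2.1.map (h ∘ₗ f) ≤ U.1 ∧ U.2.2.map (h ∘ₗ g) ≤ U.1}
        × {W : Submodule k (Fin (e₀ - e₂ - e₃) → k) // finrank k ↥W = e₁ - e₂ - e₃})) := by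
  refine ⟨(compatibleQuadruplesEquivSigma h f g e₀ e₁ e₂ e₃).trans <|
    (Equiv.sigmaCongrRight fun U => ?_).trans (Equiv.sigmaEquivProd _ _)⟩
  set T := U.1.1.comap h
  set S := U.1.2.1.map f ⊔ U.1.2.2.map g
  have hS : finrank k S = e₂ + e₃ := by
    rw [finrank_map_sup_map_of_injective hf hg hfg, U.2.2.1, U.2.2.2.1]
  have hQ : finrank k (T ⧸ S.comap T.subtype) = finrank k (Fin (e₀ - e₂ - e₃) → k) := by
    rw [finrank_quotient, (comapSubtypeEquivOfLe
      (CompatibleTriples.map_sup_map_le_comap h f g U)).finrank_eq,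
      LinearMap.finrank_comap_of_bijective hh, U.2.1, hS, finrank_fin_fun, Nat.sub_sub]
  exact (Equiv.subtypeEquivRight fun _ => by
      rw [hS, Nat.sub_sub, Nat.add_sub_cancel' h23]).trans <|
    (intervalFinrankEquiv (CompatibleTriples.map_sup_map_le_comap h f g U)
      (e₁ - e₂ - e₃)).trans <|
    (LinearEquiv.ofFinrankEq _ _ hQ).submodulesOfFinrankCongr _

/-- Reduction of type one (second instance): given a bijective map `h : V₁ → V₀`
and injective maps `f : V₂ → V₁`, `g : V₃ → V₁` whose images intersect trivially,
and `e₂ + e₃ ≤ e₁ ≤ e₀`, the set of quadruples of subspaces of dimensions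
`(e₀, e₁, e₂, e₃)` compatible with `f`, `g`, `h` is in bijection with the product
of the set of compatible triples `(U₀, U₂, U₃)` for the composed maps `h ∘ f`,
`h ∘ g` with the Grassmannian of `(e₁ − e₂ − e₃)`-dimensional subspaces of
`k^{e₀ − e₂ − e₃}`. -/
theorem stmt2 (k : Type*) [Field k]
    (V₀ V₁ V₂ V₃ : Type*)
    [AddCommGroup V₀] [Module k V₀] [FiniteDimensional k V₀]
    [AddCommGroup V₁] [Module k V₁] [FiniteDimensional k V₁]
    [AddCommGroup V₂] [Module k V₂] [FiniteDimensional k V₂]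
    [AddCommGroup V₃] [Module k V₃] [FiniteDimensional k V₃]
    (h : V₁ →ₗ[k] V₀) (f : V₂ →ₗ[k] V₁) (g : V₃ →ₗ[k] V₁)
    (hh : Function.Bijective h) (hf : Function.Injective f) (hg : Function.Injective g)
    (hfg : LinearMap.range f ⊓ LinearMap.range g = ⊥)
    (e₀ e₁ e₂ e₃ : ℕ) (h23 : e₂ + e₃ ≤ e₁) (h10 : e₁ ≤ e₀) :
    Nonempty (
      {U : Submodule k V₀ × Submodule k V₁ × Submodule k V₂ × Submodule k V₃ //
          finrank k ↥U.1 = e₀ ∧ finrank k ↥U.2.1 = e₁ ∧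
          finrank k ↥U.2.2.1 = e₂ ∧ finrank k ↥U.2.2.2 = e₃ ∧
          U.2.2.1.map f ≤ U.2.1 ∧ U.2.2.2.map g ≤ U.2.1 ∧ U.2.1.map h ≤ U.1}
        ≃
      ({U : Submodule k V₀ × Submodule k V₂ × Submodule k V₃ //
          finrank k ↥U.1 = e₀ ∧ finrank k ↥U.2.1 = e₂ ∧ finrank k ↥U.2.2 = e₃ ∧
          U.2.1.map (h ∘ₗ f) ≤ U.1 ∧ U.2.2.map (h ∘ₗ g) ≤ U.1}
        × {W : Submodule k (Fin (e₀ - e₂ - e₃) → k) // finrank k ↥W = e₁ - e₂ - e₃})) :=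
  stmt2_general k V₀ V₁ V₂ V₃ h f g hh hf hg hfg e₀ e₁ e₂ e₃ h23
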